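/- Assume a = 1/4 and b = 0 (with d, e ∈ ℝ arbitrary). Let u be a solution of the Longstaff–Schwartz equation on Ω, and let ε ∈ ℝ. Then the function w(x,y,t) = exp( ε·(4√x − tε)/2 ) · u( (2√x − tε)²/4, y, t ) satisfies the Longstaff–Schwartz equation at every point (x,y,t) ∈ Ω with 2√x > tε. -/

import Mathlib

/-- Partial derivative in `x`. -/
noncomputable def pdX (u : ℝ → ℝ → ℝ → ℝ) (x y t : ℝ) : ℝ := deriv (fun z => u z y t) x

/-- Partial derivative in `y`. -/
noncomputable def pdY (u : ℝ → ℝ → ℝ → ℝ) (x y t : ℝ) : ℝ := deriv (fun z => u x z t) y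

/-- Partial derivative in `t`. -/
noncomputable def pdT (u : ℝ → ℝ → ℝ → ℝ) (x y t : ℝ) : ℝ := deriv (fun z => u x y z) t

/-- Second partial derivative in `x`. -/
noncomputable def pdXX (u : ℝ → ℝ → ℝ → ℝ) (x y t : ℝ) : ℝ := deriv (fun z => pdX u z y t) x

/-- Second partial derivative in `y`. -/
noncomputable def pdYY (u : ℝ → ℝ → ℝ → ℝ) (x y t : ℝ) : ℝ := deriv (fun z => pdY u x z t) y

/-- The domain `Ω = {(x,y,t) : x > 0, y > 0}`. -/
def Omega : Set (ℝ × ℝ × ℝ) := {p | 0 < p.1 ∧ 0 < p.2.1}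

/-- The Longstaff–Schwartz (Kolmogorov backward) equation
`u_t = −((a−bx)·u_x + (d−ey)·u_y + (x/2)·u_xx + (y/2)·u_yy)` holds at the point `(x,y,t)`. -/
def LSEq (a b d e : ℝ) (u : ℝ → ℝ → ℝ → ℝ) (x y t : ℝ) : Prop :=
  pdT u x y t =
    -((a - b * x) * pdX u x y t + (d - e * y) * pdY u x y t +
      x / 2 * pdXX u x y t + y / 2 * pdYY u x y t)

/-- `u` is a solution of the Longstaff–Schwartz equation on `Ω`: it is C² on `Ω` and
satisfies the equation at every point of `Ω`. -/
def IsLSSolution (a b d e : ℝ) (u : ℝ → ℝ → ℝ → ℝ) : Prop :=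
  ContDiffOn ℝ 2 (fun p : ℝ × ℝ × ℝ => u p.1 p.2.1 p.2.2) Omega ∧
  ∀ x y t : ℝ, 0 < x → 0 < y → LSEq a b d e u x y t

/-!
With `r = 2√x` the `x`-part `¼ ∂ₓ + (x/2) ∂ₓ²` of the operator becomes `½ ∂ᵣ²`, so for `a = 1/4`,
`b = 0` the equation is a backward heat equation in `r` coupled to a `y`-part that does not
involve `r`. Such an equation is invariant under the Galilean boost
`v ↦ exp (ε r - ε² t / 2) · v (r - ε t, y, t)`, and this boost, written back in `x`, is `u ↦ w`.
-/

open Topology Real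

section OneVariable

variable {g : ℝ → ℝ} {p : ℝ}

theorem ContDiffAt.eventually_hasDerivAt (hg : ContDiffAt ℝ 2 g p) :
    ∀ᶠ z in 𝓝 p, HasDerivAt g (deriv g z) z :=
  (hg.eventually (by simp)).mono fun _ hz => (hz.differentiableAt two_ne_zero).hasDerivAt

theorem ContDiffAt.hasDerivAt_deriv (hg : ContDiffAt ℝ 2 g p) :
    HasDerivAt (deriv g) (deriv (deriv g) p) p :=
  ((hg.derivWithin (m := 1) (by norm_num)).differentiableAt one_ne_zero).hasDerivAt

theorem deriv_deriv_eq_of_eventually_hasDerivAt {g' : ℝ → ℝ} {g'' : ℝ}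
    (h : ∀ᶠ z in 𝓝 p, HasDerivAt g (g' z) z) (h' : HasDerivAt g' g'' p) :
    deriv (deriv g) p = g'' :=
  (Filter.EventuallyEq.deriv_eq (h.mono fun _ hz => hz.deriv)).trans h'.deriv

theorem hasDerivAt_two_mul_sqrt {x : ℝ} (hx : 0 < x) :
    HasDerivAt (fun z => 2 * √z) (1 / √x) x := by
  refine ((hasDerivAt_sqrt hx.ne').const_mul 2).congr_deriv ?_
  have := (sqrt_pos.mpr hx).ne'
  field_simp

theorem quarter_deriv_add_deriv_deriv_comp_two_sqrt {x : ℝ} (hx : 0 < x)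
    (hg : ContDiffAt ℝ 2 g (2 * √x)) :
    1 / 4 * deriv (fun z => g (2 * √z)) x + x / 2 * deriv (deriv fun z => g (2 * √z)) x =
      1 / 2 * deriv (deriv g) (2 * √x) := by
  have hsx : 0 < √x := sqrt_pos.mpr hx
  have hcomp : ∀ᶠ z in 𝓝 x, HasDerivAt (fun z => g (2 * √z)) (deriv g (2 * √z) / √z) z := by
    have hcont : ContinuousAt (fun z => 2 * √z) x := by fun_prop
    filter_upwards [lt_mem_nhds hx, hcont.eventually hg.eventually_hasDerivAt] with z hz hgz
    refine (hgz.comp z (hasDerivAt_two_mul_sqrt hz)).congr_deriv ?_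
    ring
  have h2 := (hg.hasDerivAt_deriv.comp x (hasDerivAt_two_mul_sqrt hx)).div
    (hasDerivAt_sqrt hx.ne') hsx.ne'
  rw [hcomp.self_of_nhds.deriv, deriv_deriv_eq_of_eventually_hasDerivAt hcomp h2,
    Function.comp_apply]
  have hx2 := sq_sqrt hx.le
  generalize √x = s at *
  subst hx2
  field_simp
  ring

theorem deriv_deriv_exp_mul_comp_sub {ε c k r : ℝ} (hg : ContDiffAt ℝ 2 g (r - k)) :
    deriv (deriv fun z => exp (ε * z - c) * g (z - k)) r =
      exp (ε * r - c) *
        (ε ^ 2 * g (r - k) + 2 * ε * deriv g (r - k) + deriv (deriv g) (r - k)) := by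
  have hexp : ∀ z, HasDerivAt (fun z => exp (ε * z - c)) (exp (ε * z - c) * ε) z := fun z => by
    simpa using (((hasDerivAt_id z).const_mul ε).sub_const c).exp
  have h1 : ∀ᶠ z in 𝓝 r, HasDerivAt (fun z => exp (ε * z - c) * g (z - k))
      (exp (ε * z - c) * (ε * g (z - k) + deriv g (z - k))) z := by
    have hcont : ContinuousAt (fun z => z - k) r := by fun_prop
    filter_upwards [hcont.eventually hg.eventually_hasDerivAt] with z hgz
    refine ((hexp z).mul hgz.comp_sub_const).congr_deriv ?_
    ring
  have hg1 := (hg.differentiableAt two_ne_zero).hasDerivAt.comp_sub_const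
  have hg2 := hg.hasDerivAt_deriv.comp_sub_const
  rw [deriv_deriv_eq_of_eventually_hasDerivAt h1 ((hexp r).mul ((hg1.const_mul ε).add hg2))]
  ring

end OneVariable

def uncurry₃ {α β γ δ : Type*} (f : α → β → γ → δ) : α × β × γ → δ := fun p => f p.1 p.2.1 p.2.2

theorem isOpen_Omega : IsOpen Omega :=
  (isOpen_lt continuous_const continuous_fst).inter
    (isOpen_lt continuous_const (continuous_fst.comp continuous_snd))

section ThreeVariables

variable {v : ℝ → ℝ → ℝ → ℝ} {x y t : ℝ}

theorem ContDiffAt.comp_fst_slice {n : WithTop ℕ∞} (hv : ContDiffAt ℝ n (uncurry₃ v) (x, y, t)) :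
    ContDiffAt ℝ n (fun z => v z y t) x :=
  hv.comp (f := fun z => (z, y, t)) x (by fun_prop)

theorem pdX_eq_fderiv (hv : DifferentiableAt ℝ (uncurry₃ v) (x, y, t)) :
    pdX v x y t = fderiv ℝ (uncurry₃ v) (x, y, t) (1, 0, 0) := by
  have hline : HasDerivAt (fun z => (z, y, t)) (1, 0, 0) x :=
    (hasDerivAt_id x).prodMk ((hasDerivAt_const x y).prodMk (hasDerivAt_const x t))
  exact (hv.hasFDerivAt.comp_hasDerivAt x hline).deriv

theorem pdT_eq_fderiv (hv : DifferentiableAt ℝ (uncurry₃ v) (x, y, t)) :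
    pdT v x y t = fderiv ℝ (uncurry₃ v) (x, y, t) (0, 0, 1) := by
  have hline : HasDerivAt (fun τ => (x, y, τ)) (0, 0, 1) t :=
    (hasDerivAt_const t x).prodMk ((hasDerivAt_const t y).prodMk (hasDerivAt_id t))
  exact (hv.hasFDerivAt.comp_hasDerivAt t hline).deriv

theorem hasDerivAt_comp_fst_thd {f : ℝ → ℝ} {f' : ℝ} (hf : HasDerivAt f f' t)
    (hv : DifferentiableAt ℝ (uncurry₃ v) (f t, y, t)) :
    HasDerivAt (fun τ => v (f τ) y τ) (f' * pdX v (f t) y t + pdT v (f t) y t) t := by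
  have hcurve : HasDerivAt (fun τ => (f τ, y, τ)) (f', 0, 1) t :=
    hf.prodMk ((hasDerivAt_const t y).prodMk (hasDerivAt_id t))
  refine (hv.hasFDerivAt.comp_hasDerivAt t hcurve).congr_deriv ?_
  have hsplit : ((f', 0, 1) : ℝ × ℝ × ℝ) = f' • (1, 0, 0) + (0, 0, 1) := by simp
  rw [pdX_eq_fderiv hv, pdT_eq_fderiv hv, hsplit, map_add, map_smul, smul_eq_mul]

end ThreeVariables

/-- `LSEq (1/4) 0 d e` in the variable `r = 2√x`. -/
def RadialLSEq (d e : ℝ) (v : ℝ → ℝ → ℝ → ℝ) (r y t : ℝ) : Prop :=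
  pdT v r y t = -(1 / 2 * pdXX v r y t + (d - e * y) * pdY v r y t + y / 2 * pdYY v r y t)

noncomputable section

def toRadial (u : ℝ → ℝ → ℝ → ℝ) : ℝ → ℝ → ℝ → ℝ := fun r y t => u (r ^ 2 / 4) y t

def ofRadial (v : ℝ → ℝ → ℝ → ℝ) : ℝ → ℝ → ℝ → ℝ := fun x y t => v (2 * √x) y t

def galileanBoost (ε : ℝ) (v : ℝ → ℝ → ℝ → ℝ) : ℝ → ℝ → ℝ → ℝ :=
  fun r y t => exp (ε * r - ε ^ 2 * t / 2) * v (r - t * ε) y t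

end

section Radial

variable {u v : ℝ → ℝ → ℝ → ℝ} {d e ε x r y t : ℝ}

theorem contDiffAt_toRadial {n : WithTop ℕ∞} (hu : ContDiffAt ℝ n (uncurry₃ u) (r ^ 2 / 4, y, t)) :
    ContDiffAt ℝ n (uncurry₃ (toRadial u)) (r, y, t) := by
  have hsq : ContDiffAt ℝ n (fun p : ℝ × ℝ × ℝ => (p.1 ^ 2 / 4, p.2.1, p.2.2)) (r, y, t) := by
    fun_prop
  exact hu.comp (r, y, t) hsq

theorem contDiffAt_galileanBoost {n : WithTop ℕ∞}
    (hv : ContDiffAt ℝ n (uncurry₃ v) (r - t * ε, y, t)) :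
    ContDiffAt ℝ n (uncurry₃ (galileanBoost ε v)) (r, y, t) := by
  have hmove : ContDiffAt ℝ n (fun p : ℝ × ℝ × ℝ => (p.1 - p.2.2 * ε, p.2.1, p.2.2)) (r, y, t) := by
    fun_prop
  exact ((contDiff_exp.comp (by fun_prop)).contDiffAt).mul
    (hv.comp (g := uncurry₃ v) (r, y, t) hmove)

theorem radialLSEq_toRadial (hr : 0 < r) (hu : ContDiffAt ℝ 2 (fun z => u z y t) (r ^ 2 / 4))
    (h : LSEq (1 / 4) 0 d e u (r ^ 2 / 4) y t) : RadialLSEq d e (toRadial u) r y t := by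
  have hξ : 0 < r ^ 2 / 4 := by positivity
  have hsqrt : 2 * √(r ^ 2 / 4) = r := by
    rw [show r ^ 2 / 4 = (r / 2) ^ 2 by ring, sqrt_sq (by positivity)]
    ring
  have hv : ContDiffAt ℝ 2 (fun s => toRadial u s y t) (2 * √(r ^ 2 / 4)) := by
    have hsq : ContDiffAt ℝ 2 (fun s : ℝ => s ^ 2 / 4) r := by fun_prop
    rw [hsqrt]
    exact hu.comp r hsq
  have hround : (fun z => u z y t) =ᶠ[𝓝 (r ^ 2 / 4)] fun z => toRadial u (2 * √z) y t := by
    filter_upwards [lt_mem_nhds hξ] with z hz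
    simp only [toRadial, mul_pow, sq_sqrt hz.le]
    ring_nf
  have hx_part : 1 / 4 * pdX u (r ^ 2 / 4) y t + r ^ 2 / 4 / 2 * pdXX u (r ^ 2 / 4) y t =
      1 / 2 * pdXX (toRadial u) r y t := by
    have hsub := quarter_deriv_add_deriv_deriv_comp_two_sqrt hξ hv
    rw [hsqrt, ← hround.deriv_eq, ← hround.deriv.deriv_eq] at hsub
    exact hsub
  have ht : pdT (toRadial u) r y t = pdT u (r ^ 2 / 4) y t := rfl
  have hy : pdY (toRadial u) r y t = pdY u (r ^ 2 / 4) y t := rfl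
  have hyy : pdYY (toRadial u) r y t = pdYY u (r ^ 2 / 4) y t := rfl
  unfold LSEq at h
  unfold RadialLSEq
  rw [ht, hy, hyy, h]
  linear_combination -hx_part

theorem radialLSEq_galileanBoost (hv : ContDiffAt ℝ 2 (uncurry₃ v) (r - t * ε, y, t))
    (h : RadialLSEq d e v (r - t * ε) y t) : RadialLSEq d e (galileanBoost ε v) r y t := by
  set E := exp (ε * r - ε ^ 2 * t / 2)
  have hxx : pdXX (galileanBoost ε v) r y t = E * (ε ^ 2 * v (r - t * ε) y t +
      2 * ε * pdX v (r - t * ε) y t + pdXX v (r - t * ε) y t) :=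
    deriv_deriv_exp_mul_comp_sub hv.comp_fst_slice
  have ht : pdT (galileanBoost ε v) r y t = E * (-(ε ^ 2 / 2) * v (r - t * ε) y t +
      (-ε * pdX v (r - t * ε) y t + pdT v (r - t * ε) y t)) := by
    have hexp : HasDerivAt (fun τ => exp (ε * r - ε ^ 2 * τ / 2)) (E * -(ε ^ 2 / 2)) t := by
      have hlin := (((hasDerivAt_id t).const_mul (ε ^ 2)).div_const 2).const_sub (ε * r)
      refine hlin.exp.congr_deriv ?_
      simp only [id]
      ring
    have hshift : HasDerivAt (fun τ => r - τ * ε) (-ε) t := by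
      simpa using ((hasDerivAt_id t).mul_const ε).const_sub r
    have hv' := hasDerivAt_comp_fst_thd hshift (hv.differentiableAt two_ne_zero)
    refine ((hexp.mul hv').congr_deriv ?_).deriv
    ring
  have hy : pdY (galileanBoost ε v) r y t = E * pdY v (r - t * ε) y t := deriv_const_mul_field _
  have hyy : pdYY (galileanBoost ε v) r y t = E * pdYY v (r - t * ε) y t := by
    have hy' : (fun z => pdY (galileanBoost ε v) r z t) = fun z => E * pdY v (r - t * ε) z t :=
      funext fun _ => deriv_const_mul_field _
    rw [pdYY, hy']
    exact deriv_const_mul_field _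
  unfold RadialLSEq at h ⊢
  rw [ht, hxx, hy, hyy, h]
  ring

theorem lsEq_ofRadial (hx : 0 < x) (hv : ContDiffAt ℝ 2 (fun r => v r y t) (2 * √x))
    (h : RadialLSEq d e v (2 * √x) y t) : LSEq (1 / 4) 0 d e (ofRadial v) x y t := by
  have hx_part : 1 / 4 * pdX (ofRadial v) x y t + x / 2 * pdXX (ofRadial v) x y t =
      1 / 2 * pdXX v (2 * √x) y t :=
    quarter_deriv_add_deriv_deriv_comp_two_sqrt hx hv
  have ht : pdT (ofRadial v) x y t = pdT v (2 * √x) y t := rfl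
  have hy : pdY (ofRadial v) x y t = pdY v (2 * √x) y t := rfl
  have hyy : pdYY (ofRadial v) x y t = pdYY v (2 * √x) y t := rfl
  unfold RadialLSEq at h
  unfold LSEq
  rw [ht, hy, hyy, h]
  linear_combination hx_part

end Radial

/-- Symmetry of the Longstaff–Schwartz equation when `a = 1/4` and `b = 0`
(subcase 3.4, group `G₄`). -/
theorem ls_symmetry_a_quarter_b_zero (a b d e : ℝ) (ha : a = 1 / 4) (hb : b = 0)
    (u : ℝ → ℝ → ℝ → ℝ) (hu : IsLSSolution a b d e u) (ε : ℝ) :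
    ∀ x y t : ℝ, 0 < x → 0 < y → 2 * Real.sqrt x > t * ε →
      LSEq a b d e
        (fun x y t =>
          Real.exp (ε * (4 * Real.sqrt x - t * ε) / 2) *
            u ((2 * Real.sqrt x - t * ε) ^ 2 / 4) y t)
        x y t := by
  subst ha hb
  intro x y t hx hy hxt
  have hr : 0 < 2 * √x - t * ε := sub_pos.mpr hxt
  have hξ : 0 < (2 * √x - t * ε) ^ 2 / 4 := by positivity
  have hu_smooth : ContDiffAt ℝ 2 (uncurry₃ u) ((2 * √x - t * ε) ^ 2 / 4, y, t) :=
    hu.1.contDiffAt (isOpen_Omega.mem_nhds ⟨hξ, hy⟩)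
  have hv_smooth := contDiffAt_toRadial hu_smooth
  have hv := radialLSEq_toRadial hr hu_smooth.comp_fst_slice (hu.2 _ y t hξ hy)
  have hw := radialLSEq_galileanBoost hv_smooth hv
  convert lsEq_ofRadial hx (contDiffAt_galileanBoost hv_smooth).comp_fst_slice hw using 1
  funext x y t
  simp only [ofRadial, galileanBoost, toRadial]
  congr 2
  ring
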